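/- Let G be a finite group and X a finite CW-complex with fundamental group G whose cellular chain complex of the universal cover C_*(X̃) satisfies H_3(X̃) = 0 and H^3(X̃; M) = 0 for all finitely generated Z[G]-modules M (so Tors H_2(X̃) = 0). Then the quotient module C_2(X̃)/im(∂_3) is a torsion-free abelian group, and the short exact sequence 0 → C_3(X̃) → C_2(X̃) → C_2(X̃)/im(∂_3) → 0 splits, so C_2(X̃)/im(∂_3) is a stably free Z[G]-module. -/

import Mathlib

/-!
Torsion-freeness of `J = F₂ / im ∂₃`: if `k • v ∈ im ∂₃` then `k • ∂₂ v = 0`, so `v` is a cycle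
(as `F₁` is torsion-free) whose homology class is `k`-torsion, hence zero.

Splitting: `J` is then a finitely generated torsion-free abelian group, hence free, so `∂₃` has a
`ℤ`-linear retraction `r`. For `G` finite, `ℤ[G]`-linear maps `N → ℤ[G]` correspond to additive
maps `N → ℤ` (take the coefficient at `1`; conversely `f ↦ (x ↦ ∑ g, f (g⁻¹ • x) • g)`), so each
coordinate of `r` lifts to a `ℤ[G]`-linear map, and these lifts still form a retraction of `∂₃`.
-/

namespace MonoidAlgebra

variable {k G N : Type*} [CommRing k] [Group G] [Fintype G]
  [AddCommGroup N] [Module k N] [Module k[G] N] [IsScalarTower k k[G] N]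

noncomputable def liftFunctional (f : N →ₗ[k] k) : N →ₗ[k[G]] k[G] :=
  equivariantOfLinearOfComm
    { toFun x := ∑ g : G, single g (f (single g⁻¹ (1 : k) • x))
      map_add' x y := by simp [Finset.sum_add_distrib]
      map_smul' c x := by simp [Finset.smul_sum, smul_comm _ c] }
    fun h x => by
      simp only [LinearMap.coe_mk, AddHom.coe_mk, Finset.mul_sum, smul_eq_mul,
        single_mul_single, one_mul, smul_smul]
      exact Fintype.sum_equiv (Equiv.mulLeft h⁻¹) _ _ (by simp [mul_inv_rev])

theorem liftFunctional_apply (f : N →ₗ[k] k) (x : N) :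
    liftFunctional f x = ∑ g : G, single g (f (single g⁻¹ (1 : k) • x)) :=
  rfl

theorem liftFunctional_comp {M : Type*} [AddCommGroup M] [Module k M] [Module k[G] M]
    [IsScalarTower k k[G] M] (f : N →ₗ[k] k) (ψ : M →ₗ[k[G]] N) :
    liftFunctional (f ∘ₗ ψ.restrictScalars k) = liftFunctional f ∘ₗ ψ := by
  ext x
  simp [liftFunctional_apply]

theorem liftFunctional_coord_one : liftFunctional ((basis G k).coord 1) = LinearMap.id := by
  refine LinearMap.ext_ring ?_
  rw [liftFunctional_apply, Finset.sum_eq_single 1]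
  · rw [inv_one, smul_eq_mul, mul_one, ← basis_apply k, Module.Basis.coord_apply,
      Module.Basis.repr_self, Finsupp.single_eq_same, LinearMap.id_apply, one_def]
  · intro g _ hg
    rw [smul_eq_mul, mul_one, ← basis_apply k, Module.Basis.coord_apply, Module.Basis.repr_self,
      Finsupp.single_eq_of_ne (inv_ne_one.2 hg).symm, single_zero]
  · simp

theorem liftFunctional_coord_one_comp (φ : N →ₗ[k[G]] k[G]) :
    liftFunctional ((basis G k).coord 1 ∘ₗ φ.restrictScalars k) = φ := by
  rw [liftFunctional_comp, liftFunctional_coord_one, LinearMap.id_comp]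

theorem exists_leftInverse_of_restrictScalars {ι : Type*} (ψ : (ι → k[G]) →ₗ[k[G]] N)
    (r : N →ₗ[k] (ι → k[G])) (hr : r ∘ₗ ψ.restrictScalars k = LinearMap.id) :
    ∃ l : N →ₗ[k[G]] (ι → k[G]), l ∘ₗ ψ = LinearMap.id := by
  refine ⟨LinearMap.pi fun i => liftFunctional ((basis G k).coord 1 ∘ₗ LinearMap.proj i ∘ₗ r), ?_⟩
  have key (i : ι) : liftFunctional ((basis G k).coord 1 ∘ₗ LinearMap.proj i ∘ₗ r) ∘ₗ ψ =
      LinearMap.proj (R := k[G]) i := by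
    rw [← liftFunctional_comp, LinearMap.comp_assoc, LinearMap.comp_assoc, hr, LinearMap.comp_id]
    have : (LinearMap.proj i : (ι → k[G]) →ₗ[k] k[G]) =
        (LinearMap.proj (R := k[G]) i).restrictScalars k :=
      rfl
    rw [this, liftFunctional_coord_one_comp]
  rw [LinearMap.pi_comp, funext key, LinearMap.pi_proj]

end MonoidAlgebra

theorem isAddTorsionFree_of_zsmul_eq_zero {M : Type*} [AddCommGroup M]
    (h : ∀ x : M, ∀ n : ℤ, n ≠ 0 → n • x = 0 → x = 0) : IsAddTorsionFree M :=
  Module.isTorsionFree_int_iff_isAddTorsionFree.1 <|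
    .of_smul_eq_zero fun n x hx => or_iff_not_imp_left.2 fun hn => h x n hn hx

open LinearMap in
theorem isAddTorsionFree_quotient_range_of_homology {R A B C : Type*} [Ring R]
    [AddCommGroup A] [Module R A] [AddCommGroup B] [Module R B] [AddCommGroup C] [Module R C]
    (d3 : A →ₗ[R] B) (d2 : B →ₗ[R] C) (hcomp : d2 ∘ₗ d3 = 0) [IsAddTorsionFree C]
    [IsAddTorsionFree (ker d2 ⧸ (range d3).comap (ker d2).subtype)] :
    IsAddTorsionFree (B ⧸ range d3) := by
  refine isAddTorsionFree_of_zsmul_eq_zero fun x n hn hx => ?_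
  obtain ⟨v, rfl⟩ := (range d3).mkQ_surjective x
  rw [← map_zsmul, Submodule.mkQ_apply, Submodule.Quotient.mk_eq_zero] at hx
  rw [Submodule.mkQ_apply, Submodule.Quotient.mk_eq_zero]
  have hv : v ∈ ker d2 := by
    obtain ⟨w, hw⟩ := hx
    refine (IsAddTorsionFree.zsmul_eq_zero_iff_right hn).1 ?_
    rw [← map_zsmul, ← hw, ← comp_apply, hcomp, LinearMap.zero_apply]
  have hclass : ((range d3).comap (ker d2).subtype).mkQ ⟨v, hv⟩ = 0 := by
    refine (IsAddTorsionFree.zsmul_eq_zero_iff_right hn).1 ?_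
    rwa [← map_zsmul, Submodule.mkQ_apply, Submodule.Quotient.mk_eq_zero]
  rwa [Submodule.mkQ_apply, Submodule.Quotient.mk_eq_zero] at hclass

theorem Function.Exact.exists_leftInverse_of_projective {R M N P : Type*} [Ring R]
    [AddCommGroup M] [Module R M] [AddCommGroup N] [Module R N] [AddCommGroup P] [Module R P]
    [Module.Projective R P] {f : M →ₗ[R] N} {g : N →ₗ[R] P} (h : Function.Exact f g)
    (hf : Function.Injective f) (hg : Function.Surjective g) :
    ∃ l : N →ₗ[R] M, l ∘ₗ f = LinearMap.id :=
  ((h.split_tfae hf hg).out 0 1).1 (Module.projective_lifting_property g LinearMap.id hg)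

/-- Algebraic form of the statement that a D2 complex has stably free second chain module:
let `G` be a finite group and `F_a →∂₃ F_b →∂₂ F_c` a chain complex of finitely generated
free `ℤ[G]`-modules with `∂₃` injective (`H₃ = 0`) and with `ker ∂₂ / im ∂₃` torsion-free
as an abelian group (`Tors H₂ = 0`). Then `J = F_b / im ∂₃` is torsion-free as an abelian
group (a `ℤ[G]`-lattice), and the exact sequence `0 → F_a → F_b → J → 0` splits, i.e.
`J ⊕ F_a ≅ F_b`; in particular `J` is a stably free `ℤ[G]`-module. -/
theorem stmt_12 (G : Type*) [Group G] [Finite G] (a b c : ℕ)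
    (d3 : (Fin a → MonoidAlgebra ℤ G) →ₗ[MonoidAlgebra ℤ G] (Fin b → MonoidAlgebra ℤ G))
    (d2 : (Fin b → MonoidAlgebra ℤ G) →ₗ[MonoidAlgebra ℤ G] (Fin c → MonoidAlgebra ℤ G))
    (hinj : Function.Injective d3)
    (hcomp : d2.comp d3 = 0)
    (htf : ∀ x : LinearMap.ker d2 ⧸
        (LinearMap.range d3).comap (LinearMap.ker d2).subtype,
      ∀ k : ℤ, k ≠ 0 → k • x = 0 → x = 0) :
    (∀ x : (Fin b → MonoidAlgebra ℤ G) ⧸ LinearMap.range d3,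
      ∀ k : ℤ, k ≠ 0 → k • x = 0 → x = 0) ∧
    Nonempty ((((Fin b → MonoidAlgebra ℤ G) ⧸ LinearMap.range d3) ×
        (Fin a → MonoidAlgebra ℤ G)) ≃ₗ[MonoidAlgebra ℤ G]
      (Fin b → MonoidAlgebra ℤ G)) := by
  have : Fintype G := Fintype.ofFinite G
  have := isAddTorsionFree_of_zsmul_eq_zero htf
  have := IsAddTorsionFree.of_isTorsionFree ℤ (Fin c → MonoidAlgebra ℤ G)
  have := isAddTorsionFree_quotient_range_of_homology d3 d2 hcomp
  refine ⟨fun x k hk hx => (IsAddTorsionFree.zsmul_eq_zero_iff_right hk).1 hx, ?_⟩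
  have hexact := LinearMap.exact_map_mkQ_range d3
  have hsurj := (LinearMap.range d3).mkQ_surjective
  -- finitely generated and torsion-free over `ℤ`, hence free and projective
  have : Module.Finite ℤ ((Fin b → MonoidAlgebra ℤ G) ⧸ LinearMap.range d3) :=
    .of_surjective ((LinearMap.range d3).mkQ.restrictScalars ℤ) hsurj
  obtain ⟨r, hr⟩ := Function.Exact.exists_leftInverse_of_projective
    (f := d3.restrictScalars ℤ) (g := (LinearMap.range d3).mkQ.restrictScalars ℤ) hexact hinj hsurj
  obtain ⟨l, hl⟩ := MonoidAlgebra.exists_leftInverse_of_restrictScalars d3 r hr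
  exact ⟨(LinearEquiv.prodComm _ _ _).trans (hexact.splitInjectiveEquiv hsurj ⟨l, hl⟩).1.symm⟩
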